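/- Let F be a linearly ordered field and let S be a finite set of n ≥ 1 points in F². Let 𝓛 be the finite set of all lines of F² passing through at least two points of S, each line L ∈ 𝓛 given as the zero set of an affine function f_L. Then the number of sign vectors ε : 𝓛 → {−1,+1} for which the set {x ∈ F² : ε(L)·f_L(x) > 0 for all L ∈ 𝓛} is nonempty is at most (n⁴ − 2n³ + 3n² − 2n + 8)/8. (A set of lines generated by n points in the plane has at most (n⁴ − 2n³ + 3n² − 2n + 8)/8 regions.) -/

import Mathlib

/-- The affine functional `p ↦ a i * p.1 + b i * p.2 - c i` cutting out the `i`-th line. -/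
def arrLine {F : Type*} [Field F] [LinearOrder F] [IsStrictOrderedRing F] {m : ℕ} (a b c : Fin m → F)
    (i : Fin m) (p : F × F) : F :=
  a i * p.1 + b i * p.2 - c i

/-- The open region of the family of lines associated to the sign vector `ε`
(`true ↦ +1`, `false ↦ -1`). -/
def arrRegion {F : Type*} [Field F] [LinearOrder F] [IsStrictOrderedRing F] {m : ℕ} (a b c : Fin m → F)
    (ε : Fin m → Bool) : Set (F × F) :=
  {p : F × F | ∀ i : Fin m, 0 < (if ε i then (1 : F) else -1) * arrLine a b c i p}

/-!
Removing one function `g₀` from an arrangement loses at most as many regions as there are regions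
of the remaining functions on which `g₀` changes sign. By convexity each such region meets the zero
set of `g₀`; when that zero set is a line, these regions inject into the regions of the arrangement
induced on the line, of which there are at most `k + 1` (the same deletion argument, where a sign
change pins down the unique zero). Hence `k` lines have at most `(k² + k + 2) / 2` regions. A line
generated by the points is determined by any two of them on it, so there are at most `n(n - 1)/2`
lines, and substituting gives the bound.
-/

open Finset

section SignRegions

variable {F : Type*} [Field F] [LinearOrder F] {X : Type*} {k : ℕ}

def signRegion (g : Fin k → X → F) (ε : Fin k → Bool) : Set X :=
  {x | ∀ j, 0 < (if ε j then (1 : F) else -1) * g j x}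

open Classical in
noncomputable def regionCount (g : Fin k → X → F) : ℕ :=
  #{ε | (signRegion g ε).Nonempty}

open Classical in
noncomputable def cutCount (g : Fin (k + 1) → X → F) : ℕ :=
  #{ε | ∃ x ∈ signRegion (Fin.tail g) ε, ∃ y ∈ signRegion (Fin.tail g) ε, 0 < g 0 x ∧ g 0 y < 0}

theorem mem_signRegion_succ {g : Fin (k + 1) → X → F} {ε : Fin (k + 1) → Bool} {x : X} :
    x ∈ signRegion g ε ↔
      0 < (if ε 0 then (1 : F) else -1) * g 0 x ∧ x ∈ signRegion (Fin.tail g) (Fin.tail ε) :=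
  Fin.forall_fin_succ

theorem regionCount_le_two_pow (g : Fin k → X → F) : regionCount g ≤ 2 ^ k := by
  classical
  rw [regionCount]
  simpa using card_filter_le (univ : Finset (Fin k → Bool)) _

variable [IsStrictOrderedRing F]

theorem eq_of_mem_signRegion {g : Fin k → X → F} {ε ε' : Fin k → Bool} {x : X}
    (hx : x ∈ signRegion g ε) (hx' : x ∈ signRegion g ε') : ε = ε' := by
  funext j
  have h := hx j
  have h' := hx' j
  cases hε : ε j <;> cases hε' : ε' j <;>
    simp only [hε, hε', Bool.false_eq_true, ↓reduceIte, one_mul, neg_mul, Left.neg_pos_iff]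
      at h h' ⊢ <;>
    linarith

theorem regionCount_le_regionCount_tail_add_cutCount (g : Fin (k + 1) → X → F) :
    regionCount g ≤ regionCount (Fin.tail g) + cutCount g := by
  classical
  let half (s : Bool) : Finset (Fin k → Bool) :=
    {ε | ∃ x ∈ signRegion (Fin.tail g) ε, 0 < (if s then (1 : F) else -1) * g 0 x}
  have h_fibre (s : Bool) :
      #{ε : Fin (k + 1) → Bool | (signRegion g ε).Nonempty ∧ ε 0 = s} ≤ #(half s) := by
    refine card_le_card_of_injOn Fin.tail (fun ε hε => ?_) (fun ε hε ε' hε' h => ?_)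
    · simp only [coe_filter, mem_univ, true_and, Set.mem_ofPred_eq] at hε
      obtain ⟨⟨x, hx⟩, rfl⟩ := hε
      simp only [half, coe_filter, mem_univ, true_and, Set.mem_ofPred_eq]
      exact ⟨x, (mem_signRegion_succ.mp hx).2, (mem_signRegion_succ.mp hx).1⟩
    · simp only [coe_filter, mem_univ, true_and, Set.mem_ofPred_eq] at hε hε'
      rw [← Fin.cons_self_tail ε, ← Fin.cons_self_tail ε', h, hε.2, hε'.2]
  have h_union : half true ∪ half false ⊆
      ({ε | (signRegion (Fin.tail g) ε).Nonempty} : Finset _) := by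
    intro ε
    simp only [half, mem_union, mem_filter, mem_univ, true_and]
    rintro (⟨x, hx, -⟩ | ⟨x, hx, -⟩) <;> exact ⟨x, hx⟩
  have h_inter : half true ∩ half false ⊆
      ({ε | ∃ x ∈ signRegion (Fin.tail g) ε, ∃ y ∈ signRegion (Fin.tail g) ε,
        0 < g 0 x ∧ g 0 y < 0} : Finset _) := by
    intro ε
    simp only [half, mem_inter, mem_filter, mem_univ, true_and, if_true]
    rintro ⟨⟨x, hx, hpos⟩, ⟨y, hy, hneg⟩⟩
    exact ⟨x, hx, y, hy, by simpa using hpos, by simpa using hneg⟩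
  calc regionCount g
      = #{ε : Fin (k + 1) → Bool | (signRegion g ε).Nonempty ∧ ε 0 = true} +
          #{ε : Fin (k + 1) → Bool | (signRegion g ε).Nonempty ∧ ε 0 = false} := by
        rw [regionCount, ← card_filter_add_card_filter_not (fun ε => ε 0 = true)]
        simp only [filter_filter, Bool.not_eq_true]
    _ ≤ #(half true) + #(half false) := add_le_add (h_fibre true) (h_fibre false)
    _ = #(half true ∪ half false) + #(half true ∩ half false) :=
        (card_union_add_card_inter _ _).symm
    _ ≤ regionCount (Fin.tail g) + cutCount g :=
        add_le_add (card_le_card h_union) (card_le_card h_inter)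

end SignRegions

section Affine

variable {F : Type*} [Field F] [LinearOrder F] [IsStrictOrderedRing F]
  {X : Type*} [AddCommGroup X] [Module F X] {k : ℕ}

theorem convex_signRegion (g : Fin k → X →ᵃ[F] F) (ε : Fin k → Bool) :
    Convex F (signRegion (fun j => g j) ε) := by
  have h : signRegion (fun j => g j) ε =
      ⋂ j, ((if ε j then (1 : F) else -1) • g j) ⁻¹' Set.Ioi 0 := by
    ext x
    simp only [signRegion, Set.mem_iInter, Set.mem_preimage, Set.mem_Ioi, AffineMap.coe_smul,
      Pi.smul_apply, smul_eq_mul, Set.mem_ofPred_eq]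
  rw [h]
  exact convex_iInter fun j => (convex_Ioi 0).affine_preimage _

theorem Convex.exists_mem_apply_eq_zero {s : Set X} (hs : Convex F s) (f : X →ᵃ[F] F)
    {x y : X} (hx : x ∈ s) (hy : y ∈ s) (hfx : 0 < f x) (hfy : f y < 0) :
    ∃ z ∈ s, f z = 0 := by
  have hd : 0 < f x - f y := by linarith
  refine ⟨AffineMap.lineMap x y (f x / (f x - f y)), hs.lineMap_mem hx hy
    ⟨div_nonneg hfx.le hd.le, (div_le_one hd).mpr (by linarith)⟩, ?_⟩
  rw [f.apply_lineMap, AffineMap.lineMap_apply_ring']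
  field_simp
  ring

/-- A region of `Fin.tail g` on which `g 0` changes sign contains a zero of `g 0`, hence a point
of the range of `φ`. -/
theorem cutCount_le_regionCount_comp {Y : Type*} (g : Fin (k + 1) → X →ᵃ[F] F) (φ : Y → X)
    (hφ : ∀ x, g 0 x = 0 → x ∈ Set.range φ) :
    cutCount (fun j => g j) ≤ regionCount (fun j => g j.succ ∘ φ) := by
  classical
  refine card_le_card fun ε => ?_
  simp only [mem_filter, mem_univ, true_and]
  rintro ⟨x, hx, y, hy, hfx, hfy⟩
  obtain ⟨z, hz, hz0⟩ :=
    (convex_signRegion (Fin.tail g) ε).exists_mem_apply_eq_zero (g 0) hx hy hfx hfy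
  obtain ⟨w, rfl⟩ := hφ z hz0
  exact ⟨w, hz⟩

theorem AffineMap.eq_of_apply_eq_zero (f : F →ᵃ[F] F) {x y z z' : F} (hxy : f x ≠ f y)
    (hz : f z = 0) (hz' : f z' = 0) : z = z' := by
  have hf (t : F) : f t = t * (f 1 - f 0) + f 0 := by
    simpa [AffineMap.lineMap_apply_ring'] using f.apply_lineMap 0 1 t
  have hslope : f 1 - f 0 ≠ 0 := by
    intro h
    rw [hf x, hf y, h] at hxy
    simp at hxy
  rw [hf] at hz hz'
  exact mul_right_cancel₀ hslope (by linear_combination hz - hz')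

theorem cutCount_le_one (g : Fin (k + 1) → F →ᵃ[F] F) : cutCount (fun j => g j) ≤ 1 := by
  classical
  refine card_le_one.mpr fun ε hε ε' hε' => ?_
  simp only [mem_filter, mem_univ, true_and] at hε hε'
  obtain ⟨x, hx, y, hy, hfx, hfy⟩ := hε
  obtain ⟨x', hx', y', hy', hfx', hfy'⟩ := hε'
  obtain ⟨z, hz, hz0⟩ :=
    (convex_signRegion (Fin.tail g) ε).exists_mem_apply_eq_zero (g 0) hx hy hfx hfy
  obtain ⟨z', hz', hz0'⟩ :=
    (convex_signRegion (Fin.tail g) ε').exists_mem_apply_eq_zero (g 0) hx' hy' hfx' hfy'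
  obtain rfl := (g 0).eq_of_apply_eq_zero (by linarith : g 0 x ≠ g 0 y) hz0 hz0'
  exact eq_of_mem_signRegion hz hz'

theorem regionCount_le_add_one_of_line : ∀ {k : ℕ} (g : Fin k → F →ᵃ[F] F),
    regionCount (fun j => g j) ≤ k + 1
  | 0, _ => regionCount_le_two_pow _
  | _ + 1, g => (regionCount_le_regionCount_tail_add_cutCount _).trans
      (add_le_add (regionCount_le_add_one_of_line (Fin.tail g)) (cutCount_le_one g))

theorem two_mul_regionCount_le_of_zeroSets_subset_lines (g : Fin k → X →ᵃ[F] F)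
    (hg : ∀ j, ∃ φ : F →ᵃ[F] X, ∀ x, g j x = 0 → x ∈ Set.range φ) :
    2 * regionCount (fun j => g j) ≤ k * k + k + 2 := by
  induction k with
  | zero => simpa using Nat.mul_le_mul_left 2 (regionCount_le_two_pow fun j => g j)
  | succ k ih =>
    obtain ⟨φ, hφ⟩ := hg 0
    have h_tail : 2 * regionCount (Fin.tail fun j => ⇑(g j)) ≤ k * k + k + 2 :=
      ih (Fin.tail g) (fun j => hg j.succ)
    have h_cut : cutCount (fun j => g j) ≤ k + 1 :=
      (cutCount_le_regionCount_comp g φ hφ).trans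
        (regionCount_le_add_one_of_line fun j => (g j.succ).comp φ)
    have h_step := regionCount_le_regionCount_tail_add_cutCount fun j => g j
    have h_square : (k + 1) * (k + 1) = k * k + 2 * k + 1 := by ring
    omega

end Affine

theorem eq_zero_of_mul_eq_zero_of_mul_eq_zero {R : Type*} [MulZeroClass R] [NoZeroDivisors R]
    {u v d : R} (huv : (u, v) ≠ (0, 0)) (hu : u * d = 0) (hv : v * d = 0) : d = 0 := by
  by_contra hd
  exact huv (Prod.ext ((mul_eq_zero.mp hu).resolve_right hd)
    ((mul_eq_zero.mp hv).resolve_right hd))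

/-- Whatever equation defines it, a line through distinct points `p` and `q` is
`{z | det (q - p, z - p) = 0}`. -/
theorem line_eq_zero_iff_collinear {F : Type*} [Field F] {a b c : F} (hab : (a, b) ≠ (0, 0))
    {p q : F × F} (hpq : p ≠ q) (hp : a * p.1 + b * p.2 - c = 0) (hq : a * q.1 + b * q.2 - c = 0)
    (z : F × F) :
    a * z.1 + b * z.2 - c = 0 ↔ (q.1 - p.1) * (z.2 - p.2) = (q.2 - p.2) * (z.1 - p.1) := by
  have hqp : (q.1 - p.1, q.2 - p.2) ≠ (0, 0) := by
    contrapose! hpq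
    simp only [Prod.mk.injEq, sub_eq_zero] at hpq
    exact Prod.ext hpq.1.symm hpq.2.symm
  constructor
  · intro hz
    rw [← sub_eq_zero]
    refine eq_zero_of_mul_eq_zero_of_mul_eq_zero hab ?_ ?_
    · linear_combination (z.2 - p.2) * (hq - hp) - (q.2 - p.2) * (hz - hp)
    · linear_combination (q.1 - p.1) * (hz - hp) - (z.1 - p.1) * (hq - hp)
  · intro hdet
    refine eq_zero_of_mul_eq_zero_of_mul_eq_zero hqp ?_ ?_
    · linear_combination (q.1 - p.1) * hp + b * hdet + (z.1 - p.1) * (hq - hp)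
    · linear_combination (q.2 - p.2) * hp - a * hdet + (z.2 - p.2) * (hq - hp)

section Lines

variable {F : Type*} [Field F] [LinearOrder F] [IsStrictOrderedRing F] {m : ℕ}

def arrLineAffine (a b c : Fin m → F) (i : Fin m) : F × F →ᵃ[F] F where
  toFun := arrLine a b c i
  linear := a i • LinearMap.fst F F F + b i • LinearMap.snd F F F
  map_vadd' p v := by
    simp only [arrLine, vadd_eq_add, Prod.fst_add, Prod.snd_add, LinearMap.add_apply,
      LinearMap.smul_apply, LinearMap.fst_apply, LinearMap.snd_apply, smul_eq_mul]
    ring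

theorem exists_affineMap_range_of_eq_zero {a b c : F} (hab : (a, b) ≠ (0, 0)) :
    ∃ φ : F →ᵃ[F] F × F, ∀ p : F × F, a * p.1 + b * p.2 - c = 0 → p ∈ Set.range φ := by
  have hD : a ^ 2 + b ^ 2 ≠ 0 := by
    contrapose! hab
    obtain ⟨ha, hb⟩ := (add_eq_zero_iff_of_nonneg (sq_nonneg a) (sq_nonneg b)).mp hab
    simp only [ne_eq, OfNat.ofNat_ne_zero, not_false_eq_true, pow_eq_zero_iff] at ha hb
    simp [ha, hb]
  -- `p₀` is the foot of the perpendicular from the origin; the line has direction `(-b, a)`.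
  let p₀ : F × F := (a * c / (a ^ 2 + b ^ 2), b * c / (a ^ 2 + b ^ 2))
  refine ⟨AffineMap.lineMap p₀ (p₀ + (-b, a)), fun p hp => ?_⟩
  refine ⟨(a * p.2 - b * p.1) / (a ^ 2 + b ^ 2), ?_⟩
  rw [AffineMap.lineMap_apply_module', add_sub_cancel_left]
  ext
  · simp only [p₀, Prod.smul_fst, Prod.fst_add, smul_eq_mul]
    field_simp
    linear_combination (-a) * hp
  · simp only [p₀, Prod.smul_snd, Prod.snd_add, smul_eq_mul]
    field_simp
    linear_combination (-b) * hp

theorem card_lines_le_choose_two (S : Finset (F × F)) (a b c : Fin m → F)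
    (hnd : ∀ i : Fin m, (a i, b i) ≠ (0, 0))
    (hdistinct : ∀ i j : Fin m,
      {p : F × F | arrLine a b c i p = 0} = {p : F × F | arrLine a b c j p = 0} → i = j)
    (hthrough : ∀ i : Fin m, ∃ p ∈ S, ∃ q ∈ S, p ≠ q ∧
      arrLine a b c i p = 0 ∧ arrLine a b c i q = 0) :
    m ≤ S.card.choose 2 := by
  classical
  choose P hP Q hQ hPQ hPi hQi using hthrough
  have h_on (i : Fin m) : ∀ z ∈ ({P i, Q i} : Finset (F × F)), arrLine a b c i z = 0 := by
    simp [hPi i, hQi i]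
  calc m = #(univ : Finset (Fin m)) := by simp
    _ ≤ #(S.powersetCard 2) := by
      refine card_le_card_of_injOn (fun i => {P i, Q i}) (fun i _ => ?_) fun i _ j _ h => ?_
      · rw [mem_coe, mem_powersetCard, insert_subset_iff, singleton_subset_iff]
        exact ⟨⟨hP i, hQ i⟩, card_pair (hPQ i)⟩
      · replace h : ({P i, Q i} : Finset (F × F)) = {P j, Q j} := h
        refine hdistinct i j (Set.ext fun z => ?_)
        have hPj := h_on i (P j) (h ▸ mem_insert_self _ _)
        have hQj := h_on i (Q j) (h ▸ mem_insert_of_mem (mem_singleton_self _))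
        exact (line_eq_zero_iff_collinear (hnd i) (hPQ j) hPj hQj z).trans
          (line_eq_zero_iff_collinear (hnd j) (hPQ j) (hPi j) (hQi j) z).symm
    _ = S.card.choose 2 := card_powersetCard 2 S

end Lines

theorem count_regions_of_lines_generated_by_points_general
    {F : Type*} [Field F] [LinearOrder F] [IsStrictOrderedRing F] (n : ℕ)
    (S : Finset (F × F)) (hS : S.card = n)
    (m : ℕ) (a b c : Fin m → F)
    (hnd : ∀ i : Fin m, (a i, b i) ≠ (0, 0))
    (hdistinct : ∀ i j : Fin m,
      {p : F × F | arrLine a b c i p = 0} = {p : F × F | arrLine a b c j p = 0} → i = j)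
    (hthrough : ∀ i : Fin m, ∃ p ∈ S, ∃ q ∈ S, p ≠ q ∧
      arrLine a b c i p = 0 ∧ arrLine a b c i q = 0) :
    (8 * Nat.card {ε : Fin m → Bool // (arrRegion a b c ε).Nonempty} : ℤ)
      ≤ (n : ℤ) ^ 4 - 2 * (n : ℤ) ^ 3 + 3 * (n : ℤ) ^ 2 - 2 * (n : ℤ) + 8 := by
  classical
  have h_lines : m ≤ n.choose 2 := hS ▸ card_lines_le_choose_two S a b c hnd hdistinct hthrough
  have h_regions : 2 * Nat.card {ε : Fin m → Bool // (arrRegion a b c ε).Nonempty} ≤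
      m * m + m + 2 := by
    rw [Nat.card_eq_fintype_card, Fintype.card_subtype]
    exact two_mul_regionCount_le_of_zeroSets_subset_lines (arrLineAffine a b c)
      fun i => exists_affineMap_range_of_eq_zero (hnd i)
  have h_choose : 2 * (n.choose 2 : ℤ) = n ^ 2 - n := by
    qify
    rw [Nat.cast_choose_two]
    ring
  zify at h_lines h_regions
  nlinarith

/-- The set of lines generated by `n` points of the plane (all lines through at least
two of the points) has at most `(n⁴ - 2n³ + 3n² - 2n + 8)/8` regions. -/
theorem count_regions_of_lines_generated_by_points
    {F : Type*} [Field F] [LinearOrder F] [IsStrictOrderedRing F] (n : ℕ) (hn : 1 ≤ n)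
    (S : Finset (F × F)) (hS : S.card = n)
    (m : ℕ) (a b c : Fin m → F)
    (hnd : ∀ i : Fin m, (a i, b i) ≠ (0, 0))
    (hdistinct : ∀ i j : Fin m,
      {p : F × F | arrLine a b c i p = 0} = {p : F × F | arrLine a b c j p = 0} → i = j)
    (hthrough : ∀ i : Fin m, ∃ p ∈ S, ∃ q ∈ S, p ≠ q ∧
      arrLine a b c i p = 0 ∧ arrLine a b c i q = 0)
    (hall : ∀ p ∈ S, ∀ q ∈ S, p ≠ q →
      ∃ i : Fin m, arrLine a b c i p = 0 ∧ arrLine a b c i q = 0) :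
    (8 * Nat.card {ε : Fin m → Bool // (arrRegion a b c ε).Nonempty} : ℤ)
      ≤ (n : ℤ) ^ 4 - 2 * (n : ℤ) ^ 3 + 3 * (n : ℤ) ^ 2 - 2 * (n : ℤ) + 8 :=
  count_regions_of_lines_generated_by_points_general n S hS m a b c hnd hdistinct hthrough
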